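/- arXiv:2603.11258 — 4 statements merged into one kernel-verified Lean document; each statement's English description precedes it below -/
import Mathlib

section
/- Under the Schnieper setup with assumptions (H2), for every accident year 1 ≤ i ≤ n and all indices 1 ≤ s ≤ j ≤ n, the conditional expectation of the cumulative claims satisfies almost surely E[C_{i,j} | F_s^i] = (∏_{k=s}^{j−1} (1 − Δ_k)) · C_{i,s} + E_i · ∑_{k=s+1}^{j} Λ_k · ∏_{ℓ=k}^{j−1} (1 − Δ_ℓ) (empty products equal 1, empty sums equal 0). -/
open MeasureTheory ProbabilityTheory Finset

/-- Schnieper setup, assumption (H2): the conditional mean of the cumulative claims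
`E[C_{i,j} | F_s^i]` equals
`(∏_{k=s}^{j−1} (1 − Δ_k)) C_{i,s} + E_i ∑_{k=s+1}^{j} Λ_k ∏_{ℓ=k}^{j−1} (1 − Δ_ℓ)` a.s. -/
theorem schnieper_conditional_mean
    {Ω : Type*} [mΩ : MeasurableSpace Ω] {μ : Measure Ω} [IsProbabilityMeasure μ]
    (n : ℕ) (hn : 1 ≤ n)
    (Ex : ℕ → ℝ) (hEx : ∀ i, 1 ≤ i → i ≤ n → 0 < Ex i)
    (N D C : ℕ → ℕ → Ω → ℝ)
    (hNmeas : ∀ i j, Measurable (N i j)) (hDmeas : ∀ i j, Measurable (D i j))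
    (hNL2 : ∀ i j, MemLp (N i j) 2 μ) (hDL2 : ∀ i j, MemLp (D i j) 2 μ)
    (hD1 : ∀ i, D i 1 = fun _ => 0)
    (hC1 : ∀ i, C i 1 = N i 1)
    (hCrec : ∀ i j, 1 ≤ j →
      C i (j + 1) = fun ω => C i j ω + N i (j + 1) ω - D i (j + 1) ω)
    -- the filtration F_j^i = σ(N_{i,k}, D_{i,k} : k ≤ j)
    (F : ℕ → ℕ → MeasurableSpace Ω)
    (hF : ∀ i j, F i j = ⨆ k ∈ Finset.Icc 1 j,
      (MeasurableSpace.comap (N i k) inferInstance ⊔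
        MeasurableSpace.comap (D i k) inferInstance))
    (hFle : ∀ i j, F i j ≤ mΩ)
    -- assumption (H2)
    (Λ Δ : ℕ → ℝ)
    (hΛ : ∀ j, 1 ≤ j → j ≤ n → 0 ≤ Λ j)
    (hΔ : ∀ j, 1 ≤ j → j ≤ n - 1 → Δ j ≤ 1)
    (hH2N : ∀ i j, 1 ≤ i → i ≤ n → 1 ≤ j → j ≤ n - 1 →
      μ[N i (j + 1) | F i j] =ᵐ[μ] fun _ => Λ (j + 1) * Ex i)
    (hH2D : ∀ i j, 1 ≤ i → i ≤ n → 1 ≤ j → j ≤ n - 1 →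
      μ[D i (j + 1) | F i j] =ᵐ[μ] fun ω => Δ j * C i j ω) :
    ∀ i s j, 1 ≤ i → i ≤ n → 1 ≤ s → s ≤ j → j ≤ n →
      μ[C i j | F i s] =ᵐ[μ] fun ω =>
        (∏ k ∈ Finset.Ico s j, (1 - Δ k)) * C i s ω
          + Ex i * ∑ k ∈ Finset.Icc (s + 1) j,
              Λ k * ∏ ℓ ∈ Finset.Ico k j, (1 - Δ ℓ) := by

  -- monotonicity of the filtration
  have hFmono : ∀ i a b, a ≤ b → F i a ≤ F i b := by
    intro i a b hab
    rw [hF i a, hF i b]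
    refine iSup_le fun k => iSup_le fun hk => ?_
    have hk' : k ∈ Finset.Icc 1 b := by
      simp only [Finset.mem_Icc] at hk ⊢; omega
    exact le_iSup₂_of_le k hk' le_rfl
  -- N and D are measurable w.r.t. the filtration
  have hNF : ∀ i k j, 1 ≤ k → k ≤ j → Measurable[F i j] (N i k) := by
    intro i k j h1 h2
    rw [measurable_iff_comap_le, hF i j]
    exact le_trans le_sup_left (le_iSup₂_of_le k (by simp [Finset.mem_Icc]; omega) le_rfl)
  have hDF : ∀ i k j, 1 ≤ k → k ≤ j → Measurable[F i j] (D i k) := by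
    intro i k j h1 h2
    rw [measurable_iff_comap_le, hF i j]
    exact le_trans le_sup_right (le_iSup₂_of_le k (by simp [Finset.mem_Icc]; omega) le_rfl)
  -- C i j is measurable w.r.t. F i j
  have hCF : ∀ i j, 1 ≤ j → Measurable[F i j] (C i j) := by
    intro i j hj
    induction j, hj using Nat.le_induction with
    | base => rw [hC1]; exact hNF i 1 1 le_rfl le_rfl
    | succ j hj ih =>
      rw [hCrec i j hj]
      exact ((ih.mono (hFmono i j (j + 1) (by omega)) le_rfl).add
        (hNF i (j + 1) (j + 1) (by omega) le_rfl)).sub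
        (hDF i (j + 1) (j + 1) (by omega) le_rfl)
  -- C i j is in L² hence integrable
  have hCL2 : ∀ i j, 1 ≤ j → MemLp (C i j) 2 μ := by
    intro i j hj
    induction j, hj using Nat.le_induction with
    | base => rw [hC1]; exact hNL2 i 1
    | succ j hj ih =>
      rw [hCrec i j hj]
      exact (ih.add (hNL2 i (j + 1))).sub (hDL2 i (j + 1))
  have hCint : ∀ i j, 1 ≤ j → Integrable (C i j) μ := fun i j hj =>
    (hCL2 i j hj).integrable (by norm_num)
  intro i s j hi1 hin hs1 hsj hjn
  induction j, hsj using Nat.le_induction with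
  | base =>
    rw [condExp_of_stronglyMeasurable (hFle i s)
      ((hCF i s hs1).stronglyMeasurable) (hCint i s hs1)]
    filter_upwards with ω
    rw [Finset.Ico_self, Finset.prod_empty, Finset.Icc_eq_empty (by omega),
      Finset.sum_empty]
    ring
  | succ j hsj ih =>
    have hj1 : 1 ≤ j := le_trans hs1 hsj
    have hjn' : j ≤ n := by omega
    have hjn1 : j ≤ n - 1 := by omega
    -- one-step conditional expectation
    have h1 : μ[C i (j + 1) | F i j] =ᵐ[μ]
        fun ω => (1 - Δ j) * C i j ω + Λ (j + 1) * Ex i := by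
      rw [hCrec i j hj1]
      have heq : (fun ω => C i j ω + N i (j + 1) ω - D i (j + 1) ω)
          = (C i j + N i (j + 1)) - D i (j + 1) := rfl
      rw [heq]
      have hint1 : Integrable (C i j + N i (j + 1)) μ :=
        (hCint i j hj1).add ((hNL2 i (j + 1)).integrable (by norm_num))
      have hint2 : Integrable (D i (j + 1)) μ := (hDL2 i (j + 1)).integrable (by norm_num)
      refine (condExp_sub hint1 hint2 (m := F i j)).trans ?_
      have hadd := condExp_add (hCint i j hj1) ((hNL2 i (j + 1)).integrable (by norm_num))
        (m := F i j)
      have hself : μ[C i j | F i j] = C i j :=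
        condExp_of_stronglyMeasurable (hFle i j) ((hCF i j hj1).stronglyMeasurable)
          (hCint i j hj1)
      filter_upwards [hadd, hH2N i j hi1 hin hj1 hjn1, hH2D i j hi1 hin hj1 hjn1]
        with ω ha hb hc
      simp only [Pi.sub_apply, Pi.add_apply] at ha hb hc ⊢
      rw [ha, hself, hb, hc]
      ring
    -- tower property
    have h2 : μ[C i (j + 1) | F i s] =ᵐ[μ] μ[μ[C i (j + 1) | F i j] | F i s] :=
      (condExp_condExp_of_le (hFmono i s j hsj) (hFle i j)).symm
    have h3 : μ[μ[C i (j + 1) | F i j] | F i s] =ᵐ[μ]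
        μ[(fun ω => (1 - Δ j) * C i j ω + Λ (j + 1) * Ex i) | F i s] :=
      condExp_congr_ae h1
    -- compute the conditional expectation of the affine function
    have h4 : μ[(fun ω => (1 - Δ j) * C i j ω + Λ (j + 1) * Ex i) | F i s] =ᵐ[μ]
        fun ω => (1 - Δ j) * (μ[C i j | F i s]) ω + Λ (j + 1) * Ex i := by
      have heq : (fun ω => (1 - Δ j) * C i j ω + Λ (j + 1) * Ex i)
          = ((1 - Δ j) • C i j) + (fun _ => Λ (j + 1) * Ex i) := rfl
      rw [heq]
      have hint1 : Integrable ((1 - Δ j) • C i j) μ := (hCint i j hj1).smul _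
      refine (condExp_add hint1 (integrable_const _) (m := F i s)).trans ?_
      have hsmul := condExp_smul (1 - Δ j) (C i j) (m := F i s) (μ := μ)
      rw [condExp_const (hFle i s)]
      filter_upwards [hsmul] with ω hω
      simp only [Pi.add_apply, Pi.smul_apply, smul_eq_mul] at hω ⊢
      rw [hω]
    -- combine with the induction hypothesis
    refine h2.trans (h3.trans (h4.trans ?_))
    have hP : (∏ k ∈ Finset.Ico s (j + 1), (1 - Δ k))
        = (∏ k ∈ Finset.Ico s j, (1 - Δ k)) * (1 - Δ j) :=
      Finset.prod_Ico_succ_top hsj _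
    have hS : (∑ k ∈ Finset.Icc (s + 1) (j + 1), Λ k * ∏ l ∈ Finset.Ico k (j + 1), (1 - Δ l))
        = (∑ k ∈ Finset.Icc (s + 1) j, Λ k * ∏ l ∈ Finset.Ico k j, (1 - Δ l)) * (1 - Δ j)
          + Λ (j + 1) := by
      rw [Finset.sum_Icc_succ_top (by omega), Finset.Ico_self, Finset.prod_empty, mul_one,
        Finset.sum_mul]
      congr 1
      refine Finset.sum_congr rfl fun k hk => ?_
      rw [Finset.prod_Ico_succ_top (Finset.mem_Icc.mp hk).2]
      ring
    filter_upwards [ih hjn'] with ω hω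
    rw [hω, hP, hS]
    ring
end

section
/- Under the Schnieper setup with assumptions (H2) and (H3), and assuming in addition that for each i and j the variables N_{i,j+1} and D_{i,j+1} are conditionally independent given F_j^i, for every 1 ≤ i ≤ n and 1 ≤ s ≤ j ≤ n the conditional variance satisfies almost surely Var(C_{i,j} | F_s^i) = ∑_{k=s}^{j−1} (∏_{ℓ=k+1}^{j−1} (1 − Δ_ℓ)²) · ( Σ_{k+1}² E_i + T_k² · m_k ), where m_k := (∏_{ℓ=s}^{k−1}(1 − Δ_ℓ)) · C_{i,s} + E_i ∑_{ℓ=s+1}^{k} Λ_ℓ ∏_{m=ℓ}^{k−1}(1 − Δ_m) is the conditional mean E[C_{i,k} | F_s^i] (empty products equal 1, empty sums equal 0). -/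
open MeasureTheory ProbabilityTheory Finset

section Aux

variable {Ω : Type*}

/-- auxiliary conditional mean value -/
noncomputable def schnieperMean (Δ Λ : ℕ → ℝ) (e : ℝ) (s k : ℕ) (c : ℝ) : ℝ :=
  (∏ ℓ ∈ Finset.Ico s k, (1 - Δ ℓ)) * c
    + e * ∑ ℓ ∈ Finset.Icc (s + 1) k, Λ ℓ * ∏ m ∈ Finset.Ico ℓ k, (1 - Δ m)

/-- auxiliary conditional variance value -/
noncomputable def schnieperVar (Δ Λ Sig T : ℕ → ℝ) (e : ℝ) (s j : ℕ) (c : ℝ) : ℝ :=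
  ∑ k ∈ Finset.Ico s j, (∏ ℓ ∈ Finset.Ico (k + 1) j, (1 - Δ ℓ) ^ 2) *
    (Sig (k + 1) ^ 2 * e + T k ^ 2 * schnieperMean Δ Λ e s k c)

lemma schnieperMean_self (Δ Λ : ℕ → ℝ) (e : ℝ) (s : ℕ) (c : ℝ) :
    schnieperMean Δ Λ e s s c = c := by
  simp [schnieperMean]

lemma schnieperMean_succ (Δ Λ : ℕ → ℝ) (e : ℝ) {s k : ℕ} (h : s ≤ k) (c : ℝ) :
    schnieperMean Δ Λ e s (k + 1) c
      = (1 - Δ k) * schnieperMean Δ Λ e s k c + Λ (k + 1) * e := by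
  unfold schnieperMean
  rw [Finset.prod_Ico_succ_top h, Finset.sum_Icc_succ_top (Nat.succ_le_succ h),
    Finset.sum_congr rfl (fun ℓ hℓ => by
      rw [Finset.prod_Ico_succ_top (Finset.mem_Icc.mp hℓ).2])]
  have hsum : ∑ ℓ ∈ Finset.Icc (s + 1) k,
        Λ ℓ * ((∏ m ∈ Finset.Ico ℓ k, (1 - Δ m)) * (1 - Δ k))
      = (1 - Δ k) * ∑ ℓ ∈ Finset.Icc (s + 1) k, Λ ℓ * ∏ m ∈ Finset.Ico ℓ k, (1 - Δ m) := by
    rw [Finset.mul_sum]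
    exact Finset.sum_congr rfl fun ℓ _ => by ring
  rw [hsum, Finset.Ico_self, Finset.prod_empty]
  ring

lemma schnieperVar_self (Δ Λ Sig T : ℕ → ℝ) (e : ℝ) (s : ℕ) (c : ℝ) :
    schnieperVar Δ Λ Sig T e s s c = 0 := by
  simp [schnieperVar]

lemma schnieperVar_succ (Δ Λ Sig T : ℕ → ℝ) (e : ℝ) {s j : ℕ} (h : s ≤ j) (c : ℝ) :
    schnieperVar Δ Λ Sig T e s (j + 1) c
      = (Sig (j + 1) ^ 2 * e + T j ^ 2 * schnieperMean Δ Λ e s j c)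
        + (1 - Δ j) ^ 2 * schnieperVar Δ Λ Sig T e s j c := by
  unfold schnieperVar
  rw [Finset.sum_Ico_succ_top h, Finset.Ico_self, Finset.prod_empty, one_mul,
    Finset.sum_congr rfl (fun k hk => by
      rw [Finset.prod_Ico_succ_top (Finset.mem_Ico.mp hk).2]),
    Finset.mul_sum]
  rw [add_comm]
  congr 1
  exact Finset.sum_congr rfl fun k _ => by ring

end Aux

section CondAux

private lemma memL2_mul_integrable {Ω : Type*} [MeasurableSpace Ω] {μ : Measure Ω}
    {f g : Ω → ℝ} (hf : MemLp f 2 μ) (hg : MemLp g 2 μ) :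
    Integrable (fun ω => f ω * g ω) μ := by
  rw [← memLp_one_iff_integrable]
  have h := MemLp.smul (f := g) (φ := f) (r := 1) hg hf
  exact h

private lemma condIndepFun_ae_indepFun {Ω : Type*} {m : MeasurableSpace Ω}
    [mΩ : MeasurableSpace Ω] [StandardBorelSpace Ω] {μ : Measure Ω} [IsProbabilityMeasure μ]
    (hm : m ≤ mΩ)
    {f g : Ω → ℝ} (hfm : Measurable f) (hgm : Measurable g)
    (h : CondIndepFun m hm f g μ) :
    ∀ᵐ ω ∂μ, IndepFun f g (condExpKernel μ m ω) := by
  have hpair : ∀ q r : ℚ, ∀ᵐ ω ∂μ,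
      condExpKernel μ m ω (f ⁻¹' Set.Iic (q : ℝ) ∩ g ⁻¹' Set.Iic (r : ℝ))
        = condExpKernel μ m ω (f ⁻¹' Set.Iic (q : ℝ))
          * condExpKernel μ m ω (g ⁻¹' Set.Iic (r : ℝ)) := by
    intro q r
    exact ae_of_ae_trim hm
      (h (f ⁻¹' Set.Iic (q : ℝ)) (g ⁻¹' Set.Iic (r : ℝ))
        ⟨Set.Iic (q : ℝ), measurableSet_Iic, rfl⟩ ⟨Set.Iic (r : ℝ), measurableSet_Iic, rfl⟩)
  have hall : ∀ᵐ ω ∂μ, ∀ q r : ℚ,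
      condExpKernel μ m ω (f ⁻¹' Set.Iic (q : ℝ) ∩ g ⁻¹' Set.Iic (r : ℝ))
        = condExpKernel μ m ω (f ⁻¹' Set.Iic (q : ℝ))
          * condExpKernel μ m ω (g ⁻¹' Set.Iic (r : ℝ)) := by
    rw [ae_all_iff]
    intro q
    rw [ae_all_iff]
    exact hpair q
  filter_upwards [hall] with ω hω
  have hpi : IsPiSystem (⋃ a : ℚ, {Set.Iic (a : ℝ)}) := by
    rintro s hs t ht -
    simp only [Set.mem_iUnion, Set.mem_singleton_iff] at hs ht ⊢
    obtain ⟨q, rfl⟩ := hs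
    obtain ⟨r, rfl⟩ := ht
    exact ⟨min q r, by rw [Set.Iic_inter_Iic, Rat.cast_min]⟩
  have hR : (inferInstance : MeasurableSpace ℝ)
      = MeasurableSpace.generateFrom (⋃ a : ℚ, {Set.Iic (a : ℝ)}) :=
    BorelSpace.measurable_eq.trans Real.borel_eq_generateFrom_Iic_rat
  have hgen1 : MeasurableSpace.comap f (inferInstance : MeasurableSpace ℝ)
      = MeasurableSpace.generateFrom
        (Set.preimage f '' (⋃ a : ℚ, {Set.Iic (a : ℝ)})) := by
    conv_lhs => rw [hR]
    exact MeasurableSpace.comap_generateFrom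
  have hgen2 : MeasurableSpace.comap g (inferInstance : MeasurableSpace ℝ)
      = MeasurableSpace.generateFrom
        (Set.preimage g '' (⋃ a : ℚ, {Set.Iic (a : ℝ)})) := by
    conv_lhs => rw [hR]
    exact MeasurableSpace.comap_generateFrom
  have hyp : IndepSets (Set.preimage f '' (⋃ a : ℚ, {Set.Iic (a : ℝ)}))
      (Set.preimage g '' (⋃ a : ℚ, {Set.Iic (a : ℝ)})) (condExpKernel μ m ω) := by
    rw [IndepSets_iff]
    rintro t1 t2 ⟨s1, hs1, rfl⟩ ⟨s2, hs2, rfl⟩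
    simp only [Set.mem_iUnion, Set.mem_singleton_iff] at hs1 hs2
    obtain ⟨q, rfl⟩ := hs1
    obtain ⟨r, rfl⟩ := hs2
    exact hω q r
  rw [IndepFun_iff_Indep]
  exact IndepSets.indep hfm.comap_le hgm.comap_le (hpi.comap f) (hpi.comap g) hgen1 hgen2 hyp

private lemma condexp_mul_of_condIndepFun' {Ω : Type*} {m : MeasurableSpace Ω}
    [mΩ : MeasurableSpace Ω] [StandardBorelSpace Ω] {μ : Measure Ω} [IsProbabilityMeasure μ]
    (hm : m ≤ mΩ)
    {f g : Ω → ℝ} (hfm : Measurable f) (hgm : Measurable g)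
    (hf2 : MemLp f 2 μ) (hg2 : MemLp g 2 μ)
    (h : CondIndepFun m hm f g μ) :
    μ[fun ω => f ω * g ω|m] =ᵐ[μ] fun ω => (μ[f|m]) ω * (μ[g|m]) ω := by
  have hf1 : Integrable f μ := hf2.integrable one_le_two
  have hg1 : Integrable g μ := hg2.integrable one_le_two
  have hfg : Integrable (fun ω => f ω * g ω) μ := memL2_mul_integrable hf2 hg2
  have h1 := condExp_ae_eq_integral_condExpKernel hm hfg
  have h2 := condExp_ae_eq_integral_condExpKernel hm hf1
  have h3 := condExp_ae_eq_integral_condExpKernel hm hg1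
  have hind := condIndepFun_ae_indepFun hm hfm hgm h
  have hfk : ∀ᵐ ω ∂μ, Integrable f (condExpKernel μ m ω) := hf1.condExpKernel_ae
  have hgk : ∀ᵐ ω ∂μ, Integrable g (condExpKernel μ m ω) := hg1.condExpKernel_ae
  filter_upwards [h1, h2, h3, hind, hfk, hgk] with ω e1 e2 e3 hi hif hig
  rw [e1, e2, e3]
  exact hi.integral_fun_mul_eq_mul_integral hif.aestronglyMeasurable hig.aestronglyMeasurable

private lemma condexp_lincomb {Ω : Type*} [mΩ : MeasurableSpace Ω] {μ : Measure Ω}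
    [IsFiniteMeasure μ] {m : MeasurableSpace Ω} (hm : m ≤ mΩ)
    {f1 f2 f3 f4 g1 g2 g3 g4 : Ω → ℝ} (a1 a2 a3 a4 b : ℝ)
    (h1 : Integrable f1 μ) (h2 : Integrable f2 μ) (h3 : Integrable f3 μ) (h4 : Integrable f4 μ)
    (hc1 : μ[f1|m] =ᵐ[μ] g1) (hc2 : μ[f2|m] =ᵐ[μ] g2) (hc3 : μ[f3|m] =ᵐ[μ] g3)
    (hc4 : μ[f4|m] =ᵐ[μ] g4) :
    μ[fun ω => a1 * f1 ω + a2 * f2 ω + a3 * f3 ω + a4 * f4 ω + b|m]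
      =ᵐ[μ] fun ω => a1 * g1 ω + a2 * g2 ω + a3 * g3 ω + a4 * g4 ω + b := by
  have e : (fun ω => a1 * f1 ω + a2 * f2 ω + a3 * f3 ω + a4 * f4 ω + b)
      = (a1 • f1 + a2 • f2 + a3 • f3 + a4 • f4) + fun _ => b := by
    funext ω
    simp [Pi.add_apply, Pi.smul_apply, smul_eq_mul]
  rw [e]
  have i1 : Integrable (a1 • f1) μ := h1.smul a1
  have i2 : Integrable (a2 • f2) μ := h2.smul a2
  have i3 : Integrable (a3 • f3) μ := h3.smul a3
  have i4 : Integrable (a4 • f4) μ := h4.smul a4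
  have hs : μ[a1 • f1 + a2 • f2 + a3 • f3 + a4 • f4 + (fun _ => b)|m]
      =ᵐ[μ] μ[a1 • f1|m] + μ[a2 • f2|m] + μ[a3 • f3|m] + μ[a4 • f4|m]
        + μ[(fun _ => b)|m] := by
    refine (condExp_add (((i1.add i2).add i3).add i4) (integrable_const b) m).trans ?_
    refine Filter.EventuallyEq.add ?_ Filter.EventuallyEq.rfl
    refine (condExp_add ((i1.add i2).add i3) i4 m).trans ?_
    refine Filter.EventuallyEq.add ?_ Filter.EventuallyEq.rfl
    refine (condExp_add (i1.add i2) i3 m).trans ?_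
    refine Filter.EventuallyEq.add ?_ Filter.EventuallyEq.rfl
    exact condExp_add i1 i2 m
  refine hs.trans ?_
  have e1 : μ[a1 • f1|m] =ᵐ[μ] a1 • g1 :=
    (condExp_smul a1 f1 m).trans (hc1.mono fun ω hω => by simp only [Pi.smul_apply, hω])
  have e2 : μ[a2 • f2|m] =ᵐ[μ] a2 • g2 :=
    (condExp_smul a2 f2 m).trans (hc2.mono fun ω hω => by simp only [Pi.smul_apply, hω])
  have e3 : μ[a3 • f3|m] =ᵐ[μ] a3 • g3 :=
    (condExp_smul a3 f3 m).trans (hc3.mono fun ω hω => by simp only [Pi.smul_apply, hω])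
  have e4 : μ[a4 • f4|m] =ᵐ[μ] a4 • g4 :=
    (condExp_smul a4 f4 m).trans (hc4.mono fun ω hω => by simp only [Pi.smul_apply, hω])
  have eb : μ[(fun _ : Ω => b)|m] =ᵐ[μ] fun _ => b := by rw [condExp_const hm]
  filter_upwards [e1, e2, e3, e4, eb] with ω k1 k2 k3 k4 kb
  simp only [Pi.add_apply] at *
  rw [k1, k2, k3, k4, kb]
  simp [Pi.smul_apply, smul_eq_mul]

end CondAux

/-- Schnieper setup, assumptions (H2) and (H3) together with conditional independence of
`N_{i,j+1}` and `D_{i,j+1}` given `F_j^i`: the conditional variance of the cumulative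
claims satisfies a.s.
`Var(C_{i,j} | F_s^i) = ∑_{k=s}^{j−1} (∏_{ℓ=k+1}^{j−1}(1 − Δ_ℓ)²)(Σ_{k+1}² E_i + T_k² m_k)`,
where `m_k = (∏_{ℓ=s}^{k−1}(1 − Δ_ℓ)) C_{i,s} + E_i ∑_{ℓ=s+1}^{k} Λ_ℓ ∏_{m=ℓ}^{k−1}(1 − Δ_m)`. -/
theorem schnieper_conditional_variance
    {Ω : Type*} [mΩ : MeasurableSpace Ω] [StandardBorelSpace Ω]
    {μ : Measure Ω} [IsProbabilityMeasure μ]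
    (n : ℕ) (hn : 1 ≤ n)
    (Ex : ℕ → ℝ) (hEx : ∀ i, 1 ≤ i → i ≤ n → 0 < Ex i)
    (N D C : ℕ → ℕ → Ω → ℝ)
    (hNmeas : ∀ i j, Measurable (N i j)) (hDmeas : ∀ i j, Measurable (D i j))
    (hNL2 : ∀ i j, MemLp (N i j) 2 μ) (hDL2 : ∀ i j, MemLp (D i j) 2 μ)
    (hD1 : ∀ i, D i 1 = fun _ => 0)
    (hC1 : ∀ i, C i 1 = N i 1)
    (hCrec : ∀ i j, 1 ≤ j →
      C i (j + 1) = fun ω => C i j ω + N i (j + 1) ω - D i (j + 1) ω)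
    -- the filtration F_j^i = σ(N_{i,k}, D_{i,k} : k ≤ j)
    (F : ℕ → ℕ → MeasurableSpace Ω)
    (hF : ∀ i j, F i j = ⨆ k ∈ Finset.Icc 1 j,
      (MeasurableSpace.comap (N i k) inferInstance ⊔
        MeasurableSpace.comap (D i k) inferInstance))
    (hFle : ∀ i j, F i j ≤ mΩ)
    -- assumption (H2)
    (Λ Δ : ℕ → ℝ)
    (hΛ : ∀ j, 1 ≤ j → j ≤ n → 0 ≤ Λ j)
    (hΔ : ∀ j, 1 ≤ j → j ≤ n - 1 → Δ j ≤ 1)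
    (hH2N : ∀ i j, 1 ≤ i → i ≤ n → 1 ≤ j → j ≤ n - 1 →
      μ[N i (j + 1) | F i j] =ᵐ[μ] fun _ => Λ (j + 1) * Ex i)
    (hH2D : ∀ i j, 1 ≤ i → i ≤ n → 1 ≤ j → j ≤ n - 1 →
      μ[D i (j + 1) | F i j] =ᵐ[μ] fun ω => Δ j * C i j ω)
    -- assumption (H3)
    (Sig T : ℕ → ℝ)
    (hSig : ∀ j, 1 ≤ j → j ≤ n → 0 ≤ Sig j)
    (hT : ∀ j, 1 ≤ j → j ≤ n - 1 → 0 ≤ T j)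
    (hH3N : ∀ i j, 1 ≤ i → i ≤ n → 1 ≤ j → j ≤ n - 1 →
      μ[(fun ω => (N i (j + 1) ω - (μ[N i (j + 1) | F i j]) ω) ^ 2) | F i j]
        =ᵐ[μ] fun _ => Sig (j + 1) ^ 2 * Ex i)
    (hH3D : ∀ i j, 1 ≤ i → i ≤ n → 1 ≤ j → j ≤ n - 1 →
      μ[(fun ω => (D i (j + 1) ω - (μ[D i (j + 1) | F i j]) ω) ^ 2) | F i j]
        =ᵐ[μ] fun ω => T j ^ 2 * C i j ω)
    -- conditional independence of N_{i,j+1} and D_{i,j+1} given F_j^i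
    (hCI : ∀ i j, 1 ≤ i → i ≤ n → 1 ≤ j → j ≤ n - 1 →
      CondIndepFun (F i j) (hFle i j) (N i (j + 1)) (D i (j + 1)) μ) :
    ∀ i s j, 1 ≤ i → i ≤ n → 1 ≤ s → s ≤ j → j ≤ n →
      μ[(fun ω => (C i j ω - (μ[C i j | F i s]) ω) ^ 2) | F i s] =ᵐ[μ] fun ω =>
        ∑ k ∈ Finset.Ico s j,
          (∏ ℓ ∈ Finset.Ico (k + 1) j, (1 - Δ ℓ) ^ 2) *
            (Sig (k + 1) ^ 2 * Ex i +
              T k ^ 2 *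
                ((∏ ℓ ∈ Finset.Ico s k, (1 - Δ ℓ)) * C i s ω
                  + Ex i * ∑ ℓ ∈ Finset.Icc (s + 1) k,
                      Λ ℓ * ∏ m ∈ Finset.Ico ℓ k, (1 - Δ m))) := by
  intro i s j0 hi1 hin hs1 hsj0 hj0n
  have hFmono : ∀ a b : ℕ, a ≤ b → F i a ≤ F i b := by
    intro a b hab
    rw [hF, hF]
    exact biSup_mono fun k hk => Finset.mem_Icc.mpr
      ⟨(Finset.mem_Icc.mp hk).1, le_trans (Finset.mem_Icc.mp hk).2 hab⟩
  have hNmF : ∀ a k : ℕ, 1 ≤ k → k ≤ a → Measurable[F i a] (N i k) := by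
    intro a k h1 h2
    refine Measurable.of_comap_le ?_
    rw [hF]
    have hle : (MeasurableSpace.comap (N i k) inferInstance
          ⊔ MeasurableSpace.comap (D i k) inferInstance)
        ≤ ⨆ k ∈ Finset.Icc 1 a, (MeasurableSpace.comap (N i k) inferInstance
          ⊔ MeasurableSpace.comap (D i k) inferInstance) :=
      le_iSup₂ (f := fun k _ => MeasurableSpace.comap (N i k) inferInstance
        ⊔ MeasurableSpace.comap (D i k) inferInstance) k (Finset.mem_Icc.mpr ⟨h1, h2⟩)
    exact le_trans le_sup_left hle
  have hDmF : ∀ a k : ℕ, 1 ≤ k → k ≤ a → Measurable[F i a] (D i k) := by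
    intro a k h1 h2
    refine Measurable.of_comap_le ?_
    rw [hF]
    have hle : (MeasurableSpace.comap (N i k) inferInstance
          ⊔ MeasurableSpace.comap (D i k) inferInstance)
        ≤ ⨆ k ∈ Finset.Icc 1 a, (MeasurableSpace.comap (N i k) inferInstance
          ⊔ MeasurableSpace.comap (D i k) inferInstance) :=
      le_iSup₂ (f := fun k _ => MeasurableSpace.comap (N i k) inferInstance
        ⊔ MeasurableSpace.comap (D i k) inferInstance) k (Finset.mem_Icc.mpr ⟨h1, h2⟩)
    exact le_trans le_sup_right hle
  have hCmF : ∀ a k : ℕ, 1 ≤ k → k ≤ a → Measurable[F i a] (C i k) := by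
    intro a k
    induction k with
    | zero => exact fun h _ => absurd h (Nat.not_succ_le_zero 0)
    | succ k ihk =>
      intro _ hka
      rcases Nat.eq_zero_or_pos k with rfl | hk1
      · rw [hC1]
        exact hNmF a 1 le_rfl hka
      · rw [hCrec i k hk1]
        exact ((ihk hk1 (by omega)).add (hNmF a (k + 1) (by omega) hka)).sub
          (hDmF a (k + 1) (by omega) hka)
  have hCL2 : ∀ k : ℕ, 1 ≤ k → MemLp (C i k) 2 μ := by
    intro k
    induction k with
    | zero => exact fun h => absurd h (Nat.not_succ_le_zero 0)
    | succ k ih =>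
      intro _
      rcases Nat.eq_zero_or_pos k with rfl | hk1
      · rw [hC1]
        exact hNL2 i 1
      · rw [hCrec i k hk1]
        exact ((ih hk1).add (hNL2 i (k + 1))).sub (hDL2 i (k + 1))
  have hCint : ∀ k : ℕ, 1 ≤ k → Integrable (C i k) μ :=
    fun k hk => (hCL2 k hk).integrable one_le_two
  have hNint : ∀ k : ℕ, Integrable (N i k) μ := fun k => (hNL2 i k).integrable one_le_two
  have hDint : ∀ k : ℕ, Integrable (D i k) μ := fun k => (hDL2 i k).integrable one_le_two
  have hzero : ∀ m' : MeasurableSpace Ω,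
      μ[(fun _ : Ω => (0 : ℝ))|m'] =ᵐ[μ] fun _ : Ω => (0 : ℝ) := by
    intro m'
    rw [show (fun _ : Ω => (0 : ℝ)) = (0 : Ω → ℝ) from rfl, condExp_zero]
  have hzint : Integrable (fun _ : Ω => (0 : ℝ)) μ := integrable_const 0
  have hCcond : ∀ k : ℕ, 1 ≤ k → μ[C i k|F i k] = C i k := fun k hk =>
    condExp_of_stronglyMeasurable (hFle i k) ((hCmF k k hk le_rfl).stronglyMeasurable)
      (hCint k hk)
  have hCcondae : ∀ k : ℕ, 1 ≤ k → μ[C i k|F i k] =ᵐ[μ] C i k := by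
    intro k hk
    rw [hCcond k hk]
  have hmeanstep : ∀ k : ℕ, 1 ≤ k → k + 1 ≤ n →
      μ[C i (k + 1)|F i k] =ᵐ[μ] fun ω => (1 - Δ k) * C i k ω + Λ (k + 1) * Ex i := by
    intro k hk1 hkn
    have hkn1 : k ≤ n - 1 := by omega
    rw [hCrec i k hk1]
    refine (condExp_congr_ae (Filter.Eventually.of_forall fun ω => ?_)).trans
      ((condexp_lincomb (hFle i k) 1 1 (-1) 0 0 (hCint k hk1) (hNint (k + 1)) (hDint (k + 1))
        hzint (hCcondae k hk1) (hH2N i k hi1 hin hk1 hkn1) (hH2D i k hi1 hin hk1 hkn1)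
        (hzero _)).trans (Filter.Eventually.of_forall fun ω => ?_))
    · ring
    · ring
  have hvarstep : ∀ k : ℕ, 1 ≤ k → k + 1 ≤ n →
      μ[(fun ω => (C i (k + 1) ω - ((1 - Δ k) * C i k ω + Λ (k + 1) * Ex i)) ^ 2)|F i k]
        =ᵐ[μ] fun ω => Sig (k + 1) ^ 2 * Ex i + T k ^ 2 * C i k ω := by
    intro k hk1 hkn
    have hkn1 : k ≤ n - 1 := by omega
    have hNk := hNL2 i (k + 1)
    have hDk := hDL2 i (k + 1)
    have hCk := hCL2 k hk1
    have huL2 : MemLp (fun ω => N i (k + 1) ω - Λ (k + 1) * Ex i) 2 μ :=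
      hNk.sub (memLp_const _)
    have hvL2 : MemLp (fun ω => D i (k + 1) ω - Δ k * C i k ω) 2 μ :=
      hDk.sub (hCk.const_mul _)
    have hND : μ[(fun ω => N i (k + 1) ω * D i (k + 1) ω)|F i k]
        =ᵐ[μ] fun ω => Λ (k + 1) * Ex i * (Δ k * C i k ω) := by
      refine (condexp_mul_of_condIndepFun' (hFle i k) (hNmeas i (k + 1)) (hDmeas i (k + 1))
        hNk hDk (hCI i k hi1 hin hk1 hkn1)).trans ?_
      filter_upwards [hH2N i k hi1 hin hk1 hkn1, hH2D i k hi1 hin hk1 hkn1] with ω h1 h2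
      rw [h1, h2]
    have hCN : μ[(fun ω => C i k ω * N i (k + 1) ω)|F i k]
        =ᵐ[μ] fun ω => C i k ω * (Λ (k + 1) * Ex i) := by
      have hp := condExp_mul_of_stronglyMeasurable_left (μ := μ)
        ((hCmF k k hk1 le_rfl).stronglyMeasurable)
        (memL2_mul_integrable hCk hNk) (hNint (k + 1))
      refine hp.trans ?_
      filter_upwards [hH2N i k hi1 hin hk1 hkn1] with ω h1
      simp only [Pi.mul_apply, h1]
    have huv : μ[(fun ω => (N i (k + 1) ω - Λ (k + 1) * Ex i)
          * (D i (k + 1) ω - Δ k * C i k ω))|F i k] =ᵐ[μ] fun _ : Ω => (0 : ℝ) := by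
      refine (condExp_congr_ae (Filter.Eventually.of_forall fun ω => ?_)).trans
        ((condexp_lincomb (hFle i k) 1 (-(Λ (k + 1) * Ex i)) (-(Δ k)) (Λ (k + 1) * Ex i * Δ k) 0
          (memL2_mul_integrable hNk hDk) (hDint (k + 1)) (memL2_mul_integrable hCk hNk)
          (hCint k hk1) hND (hH2D i k hi1 hin hk1 hkn1) hCN (hCcondae k hk1)).trans
          (Filter.Eventually.of_forall fun ω => ?_))
      · ring
      · ring
    have hu2 : μ[(fun ω => (N i (k + 1) ω - Λ (k + 1) * Ex i) ^ 2)|F i k]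
        =ᵐ[μ] fun _ : Ω => Sig (k + 1) ^ 2 * Ex i := by
      refine (condExp_congr_ae ?_).trans (hH3N i k hi1 hin hk1 hkn1)
      filter_upwards [hH2N i k hi1 hin hk1 hkn1] with ω h1
      rw [h1]
    have hv2 : μ[(fun ω => (D i (k + 1) ω - Δ k * C i k ω) ^ 2)|F i k]
        =ᵐ[μ] fun ω => T k ^ 2 * C i k ω := by
      refine (condExp_congr_ae ?_).trans (hH3D i k hi1 hin hk1 hkn1)
      filter_upwards [hH2D i k hi1 hin hk1 hkn1] with ω h1
      rw [h1]
    rw [hCrec i k hk1]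
    refine (condExp_congr_ae (Filter.Eventually.of_forall fun ω => ?_)).trans
      ((condexp_lincomb (hFle i k) 1 (-2) 1 0 0 huL2.integrable_sq
        (memL2_mul_integrable huL2 hvL2) hvL2.integrable_sq hzint hu2 huv hv2
        (hzero _)).trans (Filter.Eventually.of_forall fun ω => ?_))
    · ring
    · ring
  have key : ∀ t : ℕ, s ≤ t → t ≤ n →
      (μ[C i t|F i s] =ᵐ[μ] fun ω => schnieperMean Δ Λ (Ex i) s t (C i s ω)) ∧
      (μ[(fun ω => (C i t ω - (μ[C i t|F i s]) ω) ^ 2)|F i s]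
        =ᵐ[μ] fun ω => schnieperVar Δ Λ Sig T (Ex i) s t (C i s ω)) := by
    intro t hst
    induction t, hst using Nat.le_induction with
    | base =>
      intro _
      have hEq : μ[C i s|F i s] = C i s := hCcond s hs1
      constructor
      · rw [hEq]
        exact Filter.Eventually.of_forall fun ω =>
          (schnieperMean_self Δ Λ (Ex i) s (C i s ω)).symm
      · rw [hEq]
        have h0 : (fun ω => (C i s ω - C i s ω) ^ 2) = (fun _ : Ω => (0 : ℝ)) := by
          funext ω
          ring
        rw [h0]
        exact (hzero (F i s)).trans (Filter.Eventually.of_forall fun ω =>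
          (schnieperVar_self Δ Λ Sig T (Ex i) s (C i s ω)).symm)
    | succ t hst ih =>
      intro htn1
      have htn : t ≤ n := by omega
      have ht1 : 1 ≤ t := le_trans hs1 hst
      have ht1n : t + 1 ≤ n := htn1
      have hmean_t := (ih htn).1
      have hvar_t := (ih htn).2
      have hms := hmeanstep t ht1 ht1n
      have hPmF : Measurable[F i t] (fun ω => schnieperMean Δ Λ (Ex i) s t (C i s ω)) := by
        unfold schnieperMean
        exact ((hCmF t s hs1 hst).const_mul _).add measurable_const
      have hPL2 : MemLp (fun ω => schnieperMean Δ Λ (Ex i) s t (C i s ω)) 2 μ := by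
        unfold schnieperMean
        exact ((hCL2 s hs1).const_mul _).add (memLp_const _)
      have hAL2 : MemLp (fun ω => C i (t + 1) ω - ((1 - Δ t) * C i t ω + Λ (t + 1) * Ex i)) 2 μ :=
        (hCL2 (t + 1) (by omega)).sub (((hCL2 t ht1).const_mul _).add (memLp_const _))
      have hBL2 : MemLp (fun ω => (1 - Δ t)
          * (C i t ω - schnieperMean Δ Λ (Ex i) s t (C i s ω))) 2 μ :=
        ((hCL2 t ht1).sub hPL2).const_mul _
      have hBmF : Measurable[F i t] (fun ω => (1 - Δ t)
          * (C i t ω - schnieperMean Δ Λ (Ex i) s t (C i s ω))) :=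
        ((hCmF t t ht1 le_rfl).sub hPmF).const_mul _
      have hmean : μ[C i (t + 1)|F i s]
          =ᵐ[μ] fun ω => schnieperMean Δ Λ (Ex i) s (t + 1) (C i s ω) := by
        refine ((condExp_condExp_of_le (hFmono s t hst) (hFle i t)).symm.trans
          (condExp_congr_ae hms)).trans ?_
        refine (condExp_congr_ae (Filter.Eventually.of_forall fun ω => ?_)).trans
          ((condexp_lincomb (hFle i s) (1 - Δ t) 0 0 0 (Λ (t + 1) * Ex i)
            (hCint t ht1) hzint hzint hzint hmean_t (hzero _) (hzero _) (hzero _)).trans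
            (Filter.Eventually.of_forall fun ω => ?_))
        · ring
        · simp only [schnieperMean_succ Δ Λ (Ex i) hst]
          ring
      have hA0 : μ[(fun ω => C i (t + 1) ω - ((1 - Δ t) * C i t ω + Λ (t + 1) * Ex i))|F i t]
          =ᵐ[μ] fun _ : Ω => (0 : ℝ) := by
        refine (condExp_congr_ae (Filter.Eventually.of_forall fun ω => ?_)).trans
          ((condexp_lincomb (hFle i t) 1 (-(1 - Δ t)) 0 0 (-(Λ (t + 1) * Ex i))
            (hCint (t + 1) (by omega)) (hCint t ht1) hzint hzint hms (hCcondae t ht1)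
            (hzero _) (hzero _)).trans (Filter.Eventually.of_forall fun ω => ?_))
        · ring
        · ring
      have hAB0 : μ[(fun ω => (C i (t + 1) ω - ((1 - Δ t) * C i t ω + Λ (t + 1) * Ex i))
            * ((1 - Δ t) * (C i t ω - schnieperMean Δ Λ (Ex i) s t (C i s ω))))|F i t]
          =ᵐ[μ] fun _ : Ω => (0 : ℝ) := by
        have hmul := condExp_mul_of_stronglyMeasurable_left (μ := μ) hBmF.stronglyMeasurable
          (memL2_mul_integrable hBL2 hAL2) (hAL2.integrable one_le_two)
        refine (condExp_congr_ae (Filter.Eventually.of_forall fun ω =>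
          mul_comm ((fun ω => C i (t + 1) ω - ((1 - Δ t) * C i t ω + Λ (t + 1) * Ex i)) ω)
            ((fun ω => (1 - Δ t) * (C i t ω - schnieperMean Δ Λ (Ex i) s t (C i s ω))) ω))).trans
          (hmul.trans ?_)
        filter_upwards [hA0] with ω h0
        simp only [Pi.mul_apply, h0]
        simp
      have hA2cond : μ[(fun ω =>
            (C i (t + 1) ω - ((1 - Δ t) * C i t ω + Λ (t + 1) * Ex i)) ^ 2)|F i s]
          =ᵐ[μ] fun ω => Sig (t + 1) ^ 2 * Ex i
            + T t ^ 2 * schnieperMean Δ Λ (Ex i) s t (C i s ω) := by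
        refine ((condExp_condExp_of_le (hFmono s t hst) (hFle i t)).symm.trans
          (condExp_congr_ae (hvarstep t ht1 ht1n))).trans ?_
        refine (condExp_congr_ae (Filter.Eventually.of_forall fun ω => ?_)).trans
          ((condexp_lincomb (hFle i s) (T t ^ 2) 0 0 0 (Sig (t + 1) ^ 2 * Ex i)
            (hCint t ht1) hzint hzint hzint hmean_t (hzero _) (hzero _) (hzero _)).trans
            (Filter.Eventually.of_forall fun ω => ?_))
        · ring
        · ring
      have hABcond : μ[(fun ω =>
            (C i (t + 1) ω - ((1 - Δ t) * C i t ω + Λ (t + 1) * Ex i))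
            * ((1 - Δ t) * (C i t ω - schnieperMean Δ Λ (Ex i) s t (C i s ω))))|F i s]
          =ᵐ[μ] fun _ : Ω => (0 : ℝ) :=
        ((condExp_condExp_of_le (hFmono s t hst) (hFle i t)).symm.trans
          (condExp_congr_ae hAB0)).trans (hzero (F i s))
      have hB2cond : μ[(fun ω => ((1 - Δ t)
            * (C i t ω - schnieperMean Δ Λ (Ex i) s t (C i s ω))) ^ 2)|F i s]
          =ᵐ[μ] fun ω => (1 - Δ t) ^ 2 * schnieperVar Δ Λ Sig T (Ex i) s t (C i s ω) := by
        have hsq : μ[(fun ω =>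
              (C i t ω - schnieperMean Δ Λ (Ex i) s t (C i s ω)) ^ 2)|F i s]
            =ᵐ[μ] fun ω => schnieperVar Δ Λ Sig T (Ex i) s t (C i s ω) := by
          refine (condExp_congr_ae ?_).trans hvar_t
          filter_upwards [hmean_t] with ω h1
          rw [h1]
        refine (condExp_congr_ae (Filter.Eventually.of_forall fun ω => ?_)).trans
          ((condexp_lincomb (hFle i s) ((1 - Δ t) ^ 2) 0 0 0 0
            (show Integrable (fun ω =>
                (C i t ω - schnieperMean Δ Λ (Ex i) s t (C i s ω)) ^ 2) μ from
              ((hCL2 t ht1).sub hPL2).integrable_sq) hzint hzint hzint hsq (hzero _) (hzero _)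
            (hzero _)).trans (Filter.Eventually.of_forall fun ω => ?_))
        · ring
        · ring
      refine ⟨hmean, ?_⟩
      refine (condExp_congr_ae ?_).trans
        ((condexp_lincomb (hFle i s) 1 2 1 0 0 hAL2.integrable_sq
          (memL2_mul_integrable hAL2 hBL2) hBL2.integrable_sq hzint
          hA2cond hABcond hB2cond (hzero _)).trans (Filter.Eventually.of_forall fun ω => ?_))
      · filter_upwards [hmean] with ω h1
        rw [h1, schnieperMean_succ Δ Λ (Ex i) hst]
        ring
      · simp only [schnieperVar_succ Δ Λ Sig T (Ex i) hst]
        ring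
  refine ((key j0 hsj0 hj0n).2).trans (Filter.Eventually.of_forall fun ω => ?_)
  simp only [schnieperVar, schnieperMean]
end

section
/- Under the Schnieper setup with assumption (H2), for each development year 1 ≤ j ≤ n the estimator Λ̂_j := (∑_{i=1}^{n−j+1} N_{i,j}) / (∑_{i=1}^{n−j+1} E_i) is an unbiased estimator of Λ_j, i.e. E[Λ̂_j] = Λ_j. -/
open MeasureTheory ProbabilityTheory Finset

/-- Schnieper setup with assumption (H2): for each development year `1 ≤ j ≤ n`, the
estimator `Λ̂_j = (∑_{i=1}^{n−j+1} N_{i,j}) / (∑_{i=1}^{n−j+1} E_i)` is unbiased: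
`E[Λ̂_j] = Λ_j`. -/
theorem schnieper_lambda_hat_unbiased
    {Ω : Type*} [mΩ : MeasurableSpace Ω] {μ : Measure Ω} [IsProbabilityMeasure μ]
    (n : ℕ) (hn : 1 ≤ n)
    (Ex : ℕ → ℝ) (hEx : ∀ i, 1 ≤ i → i ≤ n → 0 < Ex i)
    (N D C : ℕ → ℕ → Ω → ℝ)
    (hNmeas : ∀ i j, Measurable (N i j)) (hDmeas : ∀ i j, Measurable (D i j))
    (hNL2 : ∀ i j, MemLp (N i j) 2 μ) (hDL2 : ∀ i j, MemLp (D i j) 2 μ)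
    (hD1 : ∀ i, D i 1 = fun _ => 0)
    (hC1 : ∀ i, C i 1 = N i 1)
    (hCrec : ∀ i j, 1 ≤ j →
      C i (j + 1) = fun ω => C i j ω + N i (j + 1) ω - D i (j + 1) ω)
    -- the filtration F_j^i = σ(N_{i,k}, D_{i,k} : k ≤ j)
    (F : ℕ → ℕ → MeasurableSpace Ω)
    (hF : ∀ i j, F i j = ⨆ k ∈ Finset.Icc 1 j,
      (MeasurableSpace.comap (N i k) inferInstance ⊔
        MeasurableSpace.comap (D i k) inferInstance))
    (hFle : ∀ i j, F i j ≤ mΩ)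
    -- assumption (H2)
    (Λ Δ : ℕ → ℝ)
    (hΛ : ∀ j, 1 ≤ j → j ≤ n → 0 ≤ Λ j)
    (hΔ : ∀ j, 1 ≤ j → j ≤ n - 1 → Δ j ≤ 1)
    (hH2N : ∀ i j, 1 ≤ i → i ≤ n → 1 ≤ j → j ≤ n - 1 →
      μ[N i (j + 1) | F i j] =ᵐ[μ] fun _ => Λ (j + 1) * Ex i)
    (hH2D : ∀ i j, 1 ≤ i → i ≤ n → 1 ≤ j → j ≤ n - 1 →
      μ[D i (j + 1) | F i j] =ᵐ[μ] fun ω => Δ j * C i j ω)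
    -- convention for j = 1: E[N_{i,1}] = Λ_1 E_i
    (hN1 : ∀ i, 1 ≤ i → i ≤ n → ∫ ω, N i 1 ω ∂μ = Λ 1 * Ex i) :
    ∀ j, 1 ≤ j → j ≤ n →
      ∫ ω, (∑ i ∈ Finset.Icc 1 (n - j + 1), N i j ω) /
          (∑ i ∈ Finset.Icc 1 (n - j + 1), Ex i) ∂μ = Λ j := by
  intro j hj1 hjn
  -- each N i j has mean Λ j * Ex i
  have hint : ∀ i, Integrable (N i j) μ := fun i =>
    (hNL2 i j).integrable (by norm_num)
  have hkey : ∀ i, 1 ≤ i → i ≤ n → ∫ ω, N i j ω ∂μ = Λ j * Ex i := by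
    intro i hi1 hin
    rcases Nat.exists_eq_add_of_le hj1 with ⟨k, hk⟩
    rcases Nat.eq_zero_or_pos k with hk0 | hkpos
    · subst hk; simp only [hk0]; exact hN1 i hi1 hin
    · have hj2 : j = k + 1 := by omega
      subst hj2
      have hk1 : 1 ≤ k := hkpos
      have hkn : k ≤ n - 1 := by omega
      have h1 : ∫ ω, N i (k+1) ω ∂μ = ∫ ω, (μ[N i (k+1) | F i k]) ω ∂μ :=
        (integral_condExp (hFle i k)).symm
      rw [h1, integral_congr_ae (hH2N i k hi1 hin hk1 hkn)]
      simp
  -- now compute the integral of the ratio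
  have hS : (0:ℝ) < ∑ i ∈ Finset.Icc 1 (n - j + 1), Ex i := by
    apply Finset.sum_pos
    · intro i hi
      simp only [Finset.mem_Icc] at hi
      exact hEx i hi.1 (by omega)
    · exact ⟨1, by simp [Finset.mem_Icc]⟩
  have hsumint : ∀ ω, (∑ i ∈ Finset.Icc 1 (n - j + 1), N i j ω) /
      (∑ i ∈ Finset.Icc 1 (n - j + 1), Ex i)
      = (∑ i ∈ Finset.Icc 1 (n - j + 1), N i j ω) *
        (∑ i ∈ Finset.Icc 1 (n - j + 1), Ex i)⁻¹ := fun ω => div_eq_mul_inv _ _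
  simp only [hsumint]
  rw [integral_mul_const, integral_finset_sum _ (fun i _ => hint i)]
  have : ∑ i ∈ Finset.Icc 1 (n - j + 1), ∫ ω, N i j ω ∂μ
      = Λ j * ∑ i ∈ Finset.Icc 1 (n - j + 1), Ex i := by
    rw [Finset.mul_sum]
    apply Finset.sum_congr rfl
    intro i hi
    simp only [Finset.mem_Icc] at hi
    exact hkey i hi.1 (by omega)
  rw [this, mul_assoc, mul_inv_cancel₀ hS.ne', mul_one]
end

section
/- Let X_1, …, X_m (m ≥ 2) be independent square-integrable real random variables and e_1, …, e_m positive reals such that E[X_i] = Λ e_i and Var(X_i) = Σ² e_i for all i, for some constants Λ ∈ ℝ and Σ ≥ 0. Set Λ̂ := (∑_{i=1}^m X_i)/(∑_{i=1}^m e_i). Then the weighted sample variance Σ̂² := (1/(m−1)) ∑_{i=1}^m e_i (X_i/e_i − Λ̂)² is unbiased: E[Σ̂²] = Σ². (This is the unbiasedness of Schnieper's estimator Σ̂_j² of Σ_j², applied with X_i = N_{i,j}, e_i = E_i, m = n−j+1.) -/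
open MeasureTheory ProbabilityTheory Finset

/-- Unbiasedness of Schnieper's variance estimator `Σ̂²`: if `X_1, …, X_m` (`m ≥ 2`) are
independent square-integrable random variables with `E[X_i] = Λ e_i` and
`Var(X_i) = Σ² e_i` for positive weights `e_i`, and `Λ̂ = (∑ X_i)/(∑ e_i)`, then the
weighted sample variance `Σ̂² = (1/(m−1)) ∑ e_i (X_i/e_i − Λ̂)²` satisfies `E[Σ̂²] = Σ²`. -/
theorem weighted_sample_variance_unbiased
    {Ω : Type*} [mΩ : MeasurableSpace Ω] {μ : Measure Ω} [IsProbabilityMeasure μ]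
    (m : ℕ) (hm : 2 ≤ m)
    (X : Fin m → Ω → ℝ) (e : Fin m → ℝ) (he : ∀ i, 0 < e i)
    (hmeas : ∀ i, Measurable (X i)) (hL2 : ∀ i, MemLp (X i) 2 μ)
    (hindep : iIndepFun X μ)
    (Λ Sig : ℝ) (hSig : 0 ≤ Sig)
    (hmean : ∀ i, ∫ ω, X i ω ∂μ = Λ * e i)
    (hvar : ∀ i, variance (X i) μ = Sig ^ 2 * e i) :
    ∫ ω, (1 / (m - 1 : ℝ)) *
        ∑ i, e i * (X i ω / e i - (∑ k, X k ω) / (∑ k, e k)) ^ 2 ∂μ = Sig ^ 2 := by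
  have hne : Nonempty (Fin m) := ⟨⟨0, by omega⟩⟩
  have hE : (0:ℝ) < ∑ k, e k := Finset.sum_pos (fun i _ => he i) Finset.univ_nonempty
  set E : ℝ := ∑ k, e k with hEdef
  have hEne : E ≠ 0 := ne_of_gt hE
  -- the sum random variable
  have hSL2 : MemLp (fun ω => ∑ k, X k ω) 2 μ := by
    have h := memLp_finset_sum' (μ := μ) Finset.univ (fun i _ => hL2 i)
    have heq : (∑ i : Fin m, X i) = fun ω => ∑ k, X k ω := by ext ω; simp
    rwa [heq] at h
  have hSint : Integrable (fun ω => ∑ k, X k ω) μ := hSL2.integrable one_le_two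
  have hSsq : Integrable (fun ω => (∑ k, X k ω) ^ 2) μ := hSL2.integrable_sq
  have hXsq : ∀ i, Integrable (fun ω => X i ω ^ 2) μ := fun i => (hL2 i).integrable_sq
  -- second moments
  have hX2 : ∀ i, ∫ ω, X i ω ^ 2 ∂μ = Sig ^ 2 * e i + (Λ * e i) ^ 2 := by
    intro i
    have h := variance_eq_sub (hL2 i)
    simp only [Pi.pow_apply] at h
    rw [hvar i, hmean i] at h
    linarith
  -- mean of sum
  have hSmean : ∫ ω, (∑ k, X k ω) ∂μ = Λ * E := by
    rw [integral_finset_sum _ (fun i _ => (hL2 i).integrable one_le_two)]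
    simp [hmean, ← Finset.mul_sum, hEdef]
  -- variance of sum
  have hSvar : variance (fun ω => ∑ k, X k ω) μ = Sig ^ 2 * E := by
    have h := IndepFun.variance_sum (μ := μ) (X := X) (s := Finset.univ)
      (fun i _ => hL2 i)
      (fun i _ j _ hij => hindep.indepFun hij)
    have : variance (fun ω => ∑ k, X k ω) μ = ∑ i, variance (X i) μ := by
      convert h using 2; ext ω; simp
    rw [this]; simp [hvar, ← Finset.mul_sum, hEdef]
  have hS2 : ∫ ω, (∑ k, X k ω) ^ 2 ∂μ = Sig ^ 2 * E + (Λ * E) ^ 2 := by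
    have h := variance_eq_sub hSL2
    simp only [Pi.pow_apply] at h
    rw [hSvar, hSmean] at h
    linarith
  -- pointwise simplification of the integrand
  have hpt : ∀ ω, (1 / (m - 1 : ℝ)) *
      ∑ i, e i * (X i ω / e i - (∑ k, X k ω) / E) ^ 2
      = (1 / (m - 1 : ℝ)) *
        ((∑ i, X i ω ^ 2 / e i) - (∑ k, X k ω) ^ 2 / E) := by
    intro ω
    congr 1
    have expand : ∀ i : Fin m, e i * (X i ω / e i - (∑ k, X k ω) / E) ^ 2
        = X i ω ^ 2 / e i - 2 * X i ω * (∑ k, X k ω) / E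
          + e i * ((∑ k, X k ω) ^ 2 / E ^ 2) := by
      intro i
      have hei : e i ≠ 0 := ne_of_gt (he i)
      field_simp
      ring
    rw [Finset.sum_congr rfl (fun i _ => expand i)]
    rw [Finset.sum_add_distrib, Finset.sum_sub_distrib]
    have h1 : ∑ i, 2 * X i ω * (∑ k, X k ω) / E
        = 2 * (∑ k, X k ω) ^ 2 / E := by
      rw [← Finset.sum_div]
      congr 1
      rw [← Finset.sum_mul]
      rw [← Finset.mul_sum]
      ring
    have h2 : ∑ i : Fin m, e i * ((∑ k, X k ω) ^ 2 / E ^ 2)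
        = (∑ k, X k ω) ^ 2 / E := by
      rw [← Finset.sum_mul, ← hEdef]
      field_simp
    rw [h1, h2]
    field_simp
    ring
  rw [show (fun ω => (1 / (m - 1 : ℝ)) *
        ∑ i, e i * (X i ω / e i - (∑ k, X k ω) / (∑ k, e k)) ^ 2)
      = (fun ω => (1 / (m - 1 : ℝ)) *
        ((∑ i, X i ω ^ 2 / e i) - (∑ k, X k ω) ^ 2 / E)) from funext hpt]
  rw [integral_const_mul]
  have hint1 : Integrable (fun ω => ∑ i, X i ω ^ 2 / e i) μ := by
    apply integrable_finset_sum
    intro i _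
    exact (hXsq i).div_const _
  rw [integral_sub hint1 (hSsq.div_const _)]
  rw [integral_finset_sum _ (fun i _ => (hXsq i).div_const _)]
  have hterm : ∀ i : Fin m, ∫ ω, X i ω ^ 2 / e i ∂μ = Sig ^ 2 + Λ ^ 2 * e i := by
    intro i
    rw [integral_div, hX2 i]
    have hei : e i ≠ 0 := ne_of_gt (he i)
    field_simp
  rw [Finset.sum_congr rfl (fun i _ => hterm i), Finset.sum_add_distrib]
  rw [integral_div, hS2]
  have hcard : (Finset.univ : Finset (Fin m)).card = m := by simp
  have hm1 : (m : ℝ) - 1 ≠ 0 := by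
    have : (2:ℝ) ≤ m := by exact_mod_cast hm
    linarith
  rw [Finset.sum_const, hcard, ← Finset.mul_sum, ← hEdef]
  field_simp
  ring
end
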